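/- arXiv:2409.06974 — 5 statements merged into one kernel-verified Lean document; each statement's English description precedes it below -/
import Mathlib

section
/- Let α be a finite alphabet and let E, G, H be regular languages over α. Then there exist a number n ≥ 1 and union-free languages E_1, …, E_n over α such that E·G∗·H = ⋃_{i=1}^{n} E_i·G∗·H. -/
open Language Computability

universe u

variable {α : Type}

/-- The n-fold repetition (power) of a word. -/
def wordPow (y : List α) : ℕ → List α
  | 0 => []
  | n + 1 => y ++ wordPow y n

/-- A star language: the Kleene star of some regular language. -/
def IsStarLang (L : Language α) : Prop :=
  ∃ H : Language α, H.IsRegular ∧ L = H∗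

/-- A left-sided comet. -/
def IsLeftComet (L : Language α) : Prop :=
  ∃ E G : Language α, E.IsRegular ∧ G.IsRegular ∧ G ≠ 0 ∧ G ≠ 1 ∧ L = E * G∗

/-- A right-sided comet. -/
def IsRightComet (L : Language α) : Prop :=
  ∃ G H : Language α, G.IsRegular ∧ H.IsRegular ∧ G ≠ 0 ∧ G ≠ 1 ∧ L = G∗ * H

/-- A two-sided comet. -/
def IsTwoComet (L : Language α) : Prop :=
  ∃ E G H : Language α, E.IsRegular ∧ G.IsRegular ∧ H.IsRegular ∧
    G ≠ 0 ∧ G ≠ 1 ∧ L = E * G∗ * H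

/-- A regular expression is union-free if it is built from the atoms `0` (empty language)
and single letters using only concatenation and Kleene star. -/
def RegularExpression.UnionFree : RegularExpression α → Prop
  | RegularExpression.zero => True
  | RegularExpression.epsilon => False
  | RegularExpression.char _ => True
  | RegularExpression.plus _ _ => False
  | RegularExpression.comp r s => r.UnionFree ∧ s.UnionFree
  | RegularExpression.star r => r.UnionFree

/-- A union-free language: the language of a union-free regular expression. -/
def IsUnionFree (L : Language α) : Prop :=
  ∃ r : RegularExpression α, r.UnionFree ∧ r.matches' = L

/-- A monoidal language. -/
def IsMonoidal (L : Language α) : Prop := L = (⊤ : Language α)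

/-- The language of one-letter words with letters from `X`. -/
def lettersLang (X : Set α) : Language α := {w : List α | ∃ a ∈ X, w = [a]}

/-- A combinational language: `⊤ · X` for a set `X` of one-letter words. -/
def IsCombinational (L : Language α) : Prop :=
  ∃ X : Set α, L = (⊤ : Language α) * lettersLang X

/-- A symmetric definite language: `E · ⊤ · H` with `E, H` regular. -/
def IsSymDef (L : Language α) : Prop :=
  ∃ E H : Language α, E.IsRegular ∧ H.IsRegular ∧ L = E * (⊤ : Language α) * H

/-- A nilpotent language: finite or with finite complement. -/
def IsNilpotentLang (L : Language α) : Prop := L.Finite ∨ (Lᶜ : Language α).Finite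

/-- A definite language: `A ∪ ⊤ · B` with `A, B` finite. -/
def IsDefinite (L : Language α) : Prop :=
  ∃ A B : Language α, A.Finite ∧ B.Finite ∧ L = A + (⊤ : Language α) * B  -- `+` of languages is union

/-- An ordered language: accepted by a DFA with linearly ordered state set
whose transition maps are all monotone. -/
def IsOrdered (L : Language α) : Prop :=
  ∃ (σ : Type) (_ : Fintype σ) (_ : LinearOrder σ) (M : DFA α σ),
    (∀ a : α, Monotone fun q => M.step q a) ∧ M.accepts = L

/-- The non-counting property. -/
def HasNonCounting (L : Language α) : Prop :=
  ∃ k : ℕ, 1 ≤ k ∧ ∀ x y z : List α,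
    (x ++ wordPow y k ++ z ∈ L ↔ x ++ wordPow y (k + 1) ++ z ∈ L)

/-- A non-counting (star-free) regular language. -/
def IsNonCounting (L : Language α) : Prop := L.IsRegular ∧ HasNonCounting L

/-- The power-separating property. -/
def HasPowerSep (L : Language α) : Prop :=
  ∃ m : ℕ, 1 ≤ m ∧ ∀ x : List α,
    (∀ n, m ≤ n → wordPow x n ∉ L) ∨ (∀ n, m ≤ n → wordPow x n ∈ L)

/-- A power-separating regular language. -/
def IsPowerSep (L : Language α) : Prop := L.IsRegular ∧ HasPowerSep L

/-- A suffix-closed (regular) language. -/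
def IsSuffixClosed (L : Language α) : Prop :=
  L.IsRegular ∧ ∀ x y : List α, x ++ y ∈ L → y ∈ L

/-- A circular (regular) language. -/
def IsCircular (L : Language α) : Prop :=
  L.IsRegular ∧ ∀ u v : List α, u ++ v ∈ L → v ++ u ∈ L

/-- A commutative (regular) language. -/
def IsCommutative (L : Language α) : Prop :=
  L.IsRegular ∧ ∀ w ∈ L, ∀ v : List α, w.Perm v → v ∈ L

/-- The reversal of a language. -/
def Reversal (L : Language α) : Language α := {w : List α | ∃ v ∈ L, w = v.reverse}

/-- Two families of languages are incomparable if neither is contained in the other. -/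
def Incomparable (P Q : Language α → Prop) : Prop :=
  (∃ L : Language α, P L ∧ ¬ Q L) ∧ (∃ L : Language α, Q L ∧ ¬ P L)

/-- A finite language. -/
def IsFiniteLang (L : Language α) : Prop := L.Finite


/-! Every regular language is a finite union of union-free languages; distributing
`· * G∗ * H` over that union gives the decomposition. For a DFA, let `L^S(s,t)` be the words
leading from `s` to `t` through intermediate states in `S`. Kleene's recursion
`L^{S ∪ {q}}(s,t) = L^S(s,t) + L^S(s,q) L^S(q,q)∗ L^S(q,t)` builds every `L^S(s,t)` from
single letters, `1` and `0`, and finite unions of union-free languages are closed under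
`+`, `*` and `∗`: closure under `∗` comes from `(a + b)∗ = (a∗ * b∗)∗`, which turns the star
of a finite union into the star of one union-free language. -/
theorem kstar_add {K : Type*} [KleeneAlgebra K] (a b : K) : (a + b)∗ = (a∗ * b∗)∗ := by
  have hab : a∗ * b∗ ≤ (a + b)∗ := by
    calc a∗ * b∗ ≤ (a + b)∗ * (a + b)∗ :=
          mul_le_mul' (kstar_mono le_self_add) (kstar_mono le_add_self)
      _ = (a + b)∗ := kstar_mul_kstar _
  refine le_antisymm (kstar_mono (add_le ?_ ?_)) ((kstar_mono hab).trans (kstar_idem _).le)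
  · calc a = a * 1 := (mul_one a).symm
      _ ≤ a∗ * b∗ := mul_le_mul' le_kstar one_le_kstar
  · calc b = 1 * b := (one_mul b).symm
      _ ≤ a∗ * b∗ := mul_le_mul' one_le_kstar le_kstar

theorem add_mul_kstar_mul {K : Type*} [KleeneAlgebra K] (a b : K) :
    b + a * a∗ * b = a∗ * b := by
  conv_rhs => rw [← one_add_mul_kstar, add_mul, one_mul]

section UnionFree

open RegularExpression

theorem isUnionFree_zero : IsUnionFree (0 : Language α) := ⟨zero, trivial, rfl⟩

theorem isUnionFree_one : IsUnionFree (1 : Language α) :=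
  ⟨star zero, trivial, by simp [matches']⟩

theorem isUnionFree_singleton (a : α) : IsUnionFree ({[a]} : Language α) := ⟨char a, trivial, rfl⟩

theorem IsUnionFree.mul {L M : Language α} (hL : IsUnionFree L) (hM : IsUnionFree M) :
    IsUnionFree (L * M) := by
  obtain ⟨r, hr, rfl⟩ := hL
  obtain ⟨s, hs, rfl⟩ := hM
  exact ⟨comp r s, ⟨hr, hs⟩, rfl⟩

theorem IsUnionFree.kstar {L : Language α} (hL : IsUnionFree L) : IsUnionFree L∗ := by
  obtain ⟨r, hr, rfl⟩ := hL
  exact ⟨star r, hr, rfl⟩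

end UnionFree

def IsFiniteUnionOfUnionFree (L : Language α) : Prop :=
  ∃ S : Set (Language α), S.Finite ∧ (∀ A ∈ S, IsUnionFree A) ∧ L = sSup S

namespace IsFiniteUnionOfUnionFree

theorem of_isUnionFree {L : Language α} (hL : IsUnionFree L) : IsFiniteUnionOfUnionFree L :=
  ⟨{L}, Set.finite_singleton L, by simpa using hL, sSup_singleton.symm⟩

theorem add {L M : Language α} (hL : IsFiniteUnionOfUnionFree L)
    (hM : IsFiniteUnionOfUnionFree M) : IsFiniteUnionOfUnionFree (L + M) := by
  obtain ⟨S, hS, hSuf, rfl⟩ := hL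
  obtain ⟨T, hT, hTuf, rfl⟩ := hM
  refine ⟨S ∪ T, hS.union hT, fun A hA => hA.elim (hSuf A) (hTuf A), ?_⟩
  rw [sSup_union]
  rfl

theorem mul {L M : Language α} (hL : IsFiniteUnionOfUnionFree L)
    (hM : IsFiniteUnionOfUnionFree M) : IsFiniteUnionOfUnionFree (L * M) := by
  obtain ⟨S, hS, hSuf, rfl⟩ := hL
  obtain ⟨T, hT, hTuf, rfl⟩ := hM
  refine ⟨Set.image2 (· * ·) S T, hS.image2 _ hT, ?_, ?_⟩
  · rintro _ ⟨A, hA, B, hB, rfl⟩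
    exact (hSuf A hA).mul (hTuf B hB)
  · rw [sSup_image2]
    simp only [sSup_eq_iSup, Language.iSup_mul]
    simp only [Language.mul_iSup]

theorem iSup {ι : Sort*} [Finite ι] {L : ι → Language α}
    (hL : ∀ i, IsFiniteUnionOfUnionFree (L i)) : IsFiniteUnionOfUnionFree (⨆ i, L i) := by
  choose S hS hSuf hL using hL
  refine ⟨⋃ i, S i, Set.finite_iUnion hS, ?_, by rw [sSup_iUnion]; simp_rw [hL]⟩
  simp only [Set.mem_iUnion]
  rintro A ⟨i, hA⟩
  exact hSuf i A hA

theorem exists_kstar_sSup_eq {S : Set (Language α)} (hS : S.Finite)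
    (hSuf : ∀ A ∈ S, IsUnionFree A) : ∃ U, IsUnionFree U ∧ (sSup S)∗ = U∗ := by
  induction S, hS using Set.Finite.induction_on with
  | empty => exact ⟨0, isUnionFree_zero, by simp⟩
  | @insert A S _ _ ih =>
    obtain ⟨U, hU, hSU⟩ := ih fun B hB => hSuf B (Set.mem_insert_of_mem A hB)
    refine ⟨A∗ * U∗, (hSuf A (Set.mem_insert A S)).kstar.mul hU.kstar, ?_⟩
    rw [sSup_insert, ← add_eq_sup, kstar_add, hSU]

theorem kstar {L : Language α} (hL : IsFiniteUnionOfUnionFree L) :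
    IsFiniteUnionOfUnionFree L∗ := by
  obtain ⟨S, hS, hSuf, rfl⟩ := hL
  obtain ⟨U, hU, hSU⟩ := exists_kstar_sSup_eq hS hSuf
  exact hSU ▸ of_isUnionFree hU.kstar

theorem exists_fin {L : Language α} (hL : IsFiniteUnionOfUnionFree L) :
    ∃ n : ℕ, 1 ≤ n ∧ ∃ Es : Fin n → Language α, (∀ i, IsUnionFree (Es i)) ∧ L = ⨆ i, Es i := by
  obtain ⟨S, hS, hSuf, rfl⟩ := hL
  -- adjoining `0` makes the family nonempty without changing its union
  obtain ⟨n, f, hf⟩ := (hS.insert 0).fin_embedding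
  obtain ⟨i, -⟩ : (0 : Language α) ∈ Set.range f := hf ▸ Set.mem_insert 0 S
  refine ⟨n, i.pos, f, fun i => ?_, ?_⟩
  · have : f i ∈ insert 0 S := hf ▸ Set.mem_range_self i
    exact this.elim (fun h => h ▸ isUnionFree_zero) (hSuf _)
  · rw [← sSup_range, hf, sSup_insert, ← add_eq_sup, zero_add]

end IsFiniteUnionOfUnionFree

theorem Language.mem_singleton {x y : List α} : x ∈ ({y} : Language α) ↔ x = y := Iff.rfl

namespace DFA

variable {σ : Type*} (M : DFA α σ)

/-- `M.RunsWithin S s w t`: reading `w` from `s` leads to `t`, and every state passed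
strictly in between lies in `S`. -/
def RunsWithin (S : Set σ) : σ → List α → σ → Prop
  | s, [], t => s = t
  | s, [a], t => M.step s a = t
  | s, a :: b :: w, t => M.step s a ∈ S ∧ RunsWithin S (M.step s a) (b :: w) t

def pathLang (S : Set σ) (s t : σ) : Language α := {w | M.RunsWithin S s w t}

@[simp]
theorem mem_pathLang {S : Set σ} {s t : σ} {w : List α} :
    w ∈ M.pathLang S s t ↔ M.RunsWithin S s w t := Iff.rfl

variable {M} {S T : Set σ} {s q t : σ}

theorem RunsWithin.mono (h : S ⊆ T) {w : List α} (hw : M.RunsWithin S s w t) :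
    M.RunsWithin T s w t := by
  induction w generalizing s with
  | nil => exact hw
  | cons a v ih =>
    cases v with
    | nil => exact hw
    | cons b w => exact ⟨h hw.1, ih hw.2⟩

theorem runsWithin_cons {a : α} {w : List α} (ha : M.step s a ∈ S)
    (hw : M.RunsWithin S (M.step s a) w t) : M.RunsWithin S s (a :: w) t := by
  cases w with
  | nil => exact hw
  | cons b w => exact ⟨ha, hw⟩

theorem RunsWithin.append (hq : q ∈ S) {x y : List α} (hx : M.RunsWithin S s x q)
    (hy : M.RunsWithin S q y t) : M.RunsWithin S s (x ++ y) t := by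
  induction x generalizing s with
  | nil => exact (show s = q from hx) ▸ hy
  | cons a v ih =>
    cases v with
    | nil => exact runsWithin_cons ((show M.step s a = q from hx) ▸ hq) (hx ▸ hy)
    | cons b w => exact runsWithin_cons hx.1 (ih hx.2)

theorem runsWithin_univ {w : List α} : M.RunsWithin Set.univ s w t ↔ M.evalFrom s w = t := by
  induction w generalizing s with
  | nil => rfl
  | cons a v ih =>
    cases v with
    | nil => rfl
    | cons b w => simpa [RunsWithin, evalFrom_cons] using ih

theorem pathLang_mono (h : S ⊆ T) : M.pathLang S s t ≤ M.pathLang T s t :=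
  fun _ hw => hw.mono h

theorem singleton_mul_pathLang_le {a : α} (ha : M.step s a ∈ S) :
    {[a]} * M.pathLang S (M.step s a) t ≤ M.pathLang S s t := by
  rintro _ ⟨_, rfl, w, hw, rfl⟩
  exact runsWithin_cons ha hw

theorem pathLang_mul_pathLang_le (hq : q ∈ S) :
    M.pathLang S s q * M.pathLang S q t ≤ M.pathLang S s t := by
  rintro _ ⟨x, hx, y, hy, rfl⟩
  exact hx.append hq hy

theorem kstar_pathLang_le (hq : q ∈ S) : (M.pathLang S q q)∗ ≤ M.pathLang S q q :=
  kstar_le_of_mul_le_left (fun _ h => (show _ = [] from h) ▸ rfl)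
    (pathLang_mul_pathLang_le hq)

theorem pathLang_empty :
    M.pathLang ∅ s t = (⨆ _ : s = t, 1) + ⨆ (a) (_ : M.step s a = t), {[a]} := by
  ext w
  simp only [mem_pathLang, Language.mem_add, Language.mem_iSup]
  rcases w with _ | ⟨a, _ | ⟨b, w⟩⟩ <;> simp [RunsWithin, Language.mem_one, Language.mem_singleton]

theorem pathLang_insert_le :
    M.pathLang (insert q S) s t ≤
      M.pathLang S s t + M.pathLang S s q * (M.pathLang S q q)∗ * M.pathLang S q t := by
  intro w hw
  induction w generalizing s with
  | nil => exact Or.inl hw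
  | cons a v ih =>
    cases v with
    | nil => exact Or.inl hw
    | cons b w =>
      obtain ⟨ha, hw⟩ := hw
      -- with `R s` the right-hand side, `a :: b :: w ∈ {[a]} * R (M.step s a) ≤ R s`
      refine Set.mem_of_mem_of_subset (Language.append_mem_mul (l := {[a]}) rfl (ih hw)) ?_
      change ({[a]} : Language α) * _ ≤ (_ : Language α)
      rcases Set.mem_insert_iff.1 ha with hq | hS
      · have hsq : {[a]} ≤ M.pathLang S s q := fun _ h => (show _ = [a] from h) ▸ hq
        rw [hq, add_mul_kstar_mul, ← mul_assoc]
        exact le_add_left (mul_le_mul_left (mul_le_mul_left hsq _) _)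
      · rw [mul_add, ← mul_assoc, ← mul_assoc]
        exact add_le_add (singleton_mul_pathLang_le hS)
          (mul_le_mul_left (mul_le_mul_left (singleton_mul_pathLang_le hS) _) _)

theorem pathLang_insert :
    M.pathLang (insert q S) s t =
      M.pathLang S s t + M.pathLang S s q * (M.pathLang S q q)∗ * M.pathLang S q t := by
  refine le_antisymm pathLang_insert_le (add_le (pathLang_mono (Set.subset_insert q S)) ?_)
  have hq : q ∈ insert q S := Set.mem_insert q S
  have hmono {s t : σ} := pathLang_mono (M := M) (s := s) (t := t) (Set.subset_insert q S)
  calc M.pathLang S s q * (M.pathLang S q q)∗ * M.pathLang S q t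
      ≤ M.pathLang (insert q S) s q * M.pathLang (insert q S) q t :=
        mul_le_mul' (mul_le_mul' hmono ((kstar_mono hmono).trans (kstar_pathLang_le hq))
          |>.trans (pathLang_mul_pathLang_le hq)) hmono
    _ ≤ M.pathLang (insert q S) s t := pathLang_mul_pathLang_le hq

theorem accepts_eq_iSup_pathLang : M.accepts = ⨆ t : M.accept, M.pathLang Set.univ M.start t := by
  ext w
  simp only [mem_accepts, Language.mem_iSup, mem_pathLang, runsWithin_univ]
  exact ⟨fun h => ⟨⟨_, h⟩, rfl⟩, fun ⟨t, ht⟩ => by rw [eval, ht]; exact t.2⟩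

theorem isFiniteUnionOfUnionFree_pathLang [Finite α] (hS : S.Finite) (s t : σ) :
    IsFiniteUnionOfUnionFree (M.pathLang S s t) := by
  induction S, hS using Set.Finite.induction_on generalizing s t with
  | empty =>
    rw [pathLang_empty]
    exact .add (.iSup fun _ => .of_isUnionFree isUnionFree_one)
      (.iSup fun a => .iSup fun _ => .of_isUnionFree (isUnionFree_singleton a))
  | insert _ _ ih =>
    rw [pathLang_insert]
    exact (ih s t).add (((ih _ _).mul (ih _ _).kstar).mul (ih _ _))

end DFA

theorem Language.IsRegular.isFiniteUnionOfUnionFree [Finite α] {L : Language α}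
    (hL : L.IsRegular) : IsFiniteUnionOfUnionFree L := by
  obtain ⟨σ, _, M, rfl⟩ := hL
  rw [M.accepts_eq_iSup_pathLang]
  exact .iSup fun t => M.isFiniteUnionOfUnionFree_pathLang Set.finite_univ _ _

theorem twoComet_unionFree_decomposition_general [Fintype α] (E G H : Language α)
    (hE : E.IsRegular) :
    ∃ n : ℕ, 1 ≤ n ∧ ∃ Es : Fin n → Language α,
      (∀ i, IsUnionFree (Es i)) ∧ E * G∗ * H = ⋃ i, Es i * G∗ * H := by
  obtain ⟨n, hn, Es, hEs, rfl⟩ := hE.isFiniteUnionOfUnionFree.exists_fin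
  refine ⟨n, hn, Es, hEs, ?_⟩
  simp only [Language.iSup_mul]
  rfl

/-- Every two-sided comet `E·G∗·H` is a finite union of languages `Eᵢ·G∗·H`
with union-free languages `Eᵢ`. -/
theorem twoComet_unionFree_decomposition [Fintype α] (E G H : Language α)
    (hE : E.IsRegular) (hG : G.IsRegular) (hH : H.IsRegular) :
    ∃ n : ℕ, 1 ≤ n ∧ ∃ Es : Fin n → Language α,
      (∀ i, IsUnionFree (Es i)) ∧ E * G∗ * H = ⋃ i, Es i * G∗ * H :=
  twoComet_unionFree_decomposition_general E G H hE
end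

section
/- Let α be a finite alphabet and let L = E·G∗·H where E is a union-free language and G, H are regular languages over α with G ≠ ∅ and G ≠ {ε}. Then there exist a finite language E′ and regular languages G′, H′ over α with G′ ≠ ∅ and G′ ≠ {ε} such that L = E′·G′∗·H′. -/
open Language Computability

universe u

variable {α : Type}

/-! Induct on a union-free expression for `E`, absorbing it into a comet `F * G∗ * H` with `F`
finite from the left: `∅` and letters join the finite tail `F`, a concatenation is absorbed one
factor at a time, and a star `A∗` is either `1` (when `A` is `∅` or `{ε}`) or becomes the new
middle, with first tail `{ε}` and the old comet as last tail. That last tail stays regular because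
regular languages are closed under concatenation and star, which we read off the Myhill–Nerode
characterisation: a left quotient of `L * M` or of `L∗` is determined by finitely much data about
left quotients of `L` and `M`. -/

namespace Language

variable {L M : Language α}

theorem IsRegular.of_append_mem_iff {β : Type*} {d : List α → β} (hd : (Set.range d).Finite)
    (P : β → List α → Prop) (h : ∀ x y, x ++ y ∈ L ↔ P (d x) y) : L.IsRegular := by
  refine .of_finite_range_leftQuotient ((hd.image fun b => {y | P b y}).subset ?_)
  rintro _ ⟨x, rfl⟩
  exact ⟨d x, ⟨x, rfl⟩, Set.ext fun y => (h x y).symm⟩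

theorem IsRegular.of_finite (hL : L.Finite) : L.IsRegular := by
  let prefixes : Set (List α) := ⋃ w ∈ L, {p | p <+: w}
  have hprefixes : prefixes.Finite :=
    hL.biUnion fun w _ => w.inits.finite_toSet.subset fun p hp => (List.mem_inits p w).mpr hp
  refine .of_finite_range_leftQuotient (((hprefixes.image L.leftQuotient).insert 0).subset ?_)
  rintro _ ⟨x, rfl⟩
  by_cases hx : L.leftQuotient x = 0
  · exact Or.inl hx
  · obtain ⟨y, hy⟩ := Set.nonempty_iff_ne_empty.mpr hx
    exact Or.inr ⟨x, Set.mem_biUnion hy (List.prefix_append x y), rfl⟩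

theorem append_mem_mul_iff {x y : List α} :
    x ++ y ∈ L * M ↔
      y ∈ L.leftQuotient x * M ∨ ∃ v, (∃ u ∈ L, u ++ v = x) ∧ y ∈ M.leftQuotient v := by
  constructor
  · rintro ⟨a, ha, b, hb, hab⟩
    rcases List.append_eq_append_iff.mp hab with ⟨v, rfl, rfl⟩ | ⟨c, rfl, rfl⟩
    · exact Or.inr ⟨v, ⟨a, ha, rfl⟩, hb⟩
    · exact Or.inl ⟨c, ha, b, hb, rfl⟩
  · rintro (⟨c, hc, b, hb, rfl⟩ | ⟨v, ⟨u, hu, rfl⟩, hv⟩)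
    · exact ⟨x ++ c, hc, b, hb, List.append_assoc x c b⟩
    · exact ⟨u, hu, v ++ y, hv, (List.append_assoc u v y).symm⟩

theorem IsRegular.mul (hL : L.IsRegular) (hM : M.IsRegular) : (L * M).IsRegular := by
  let suffixes (x : List α) : Set (List α) := {v | ∃ u ∈ L, u ++ v = x}
  refine .of_append_mem_iff (d := fun x => (L.leftQuotient x, M.leftQuotient '' suffixes x))
    ((hL.finite_range_leftQuotient.prod hM.finite_range_leftQuotient.powerset).subset ?_)
    (fun p y => y ∈ p.1 * M ∨ ∃ N ∈ p.2, y ∈ N)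
    fun x y => by simp only [append_mem_mul_iff, Set.exists_mem_image]; rfl
  rintro _ ⟨x, rfl⟩
  exact ⟨⟨x, rfl⟩, Set.image_subset_range _ _⟩

theorem append_mem_kstar_iff {x y : List α} :
    x ++ y ∈ L∗ ↔
      (x ∈ L∗ ∧ y = []) ∨ ∃ v, (∃ w ∈ L∗, w ++ v = x) ∧ y ∈ L.leftQuotient v * L∗ := by
  constructor
  · rw [mem_kstar]
    rintro ⟨ws, hxy, hws⟩
    induction ws generalizing x with
    | nil =>
      obtain ⟨rfl, rfl⟩ := List.append_eq_nil_iff.mp hxy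
      exact Or.inl ⟨nil_mem_kstar L, rfl⟩
    | cons f ws ih =>
      have hf : f ∈ L := hws f List.mem_cons_self
      have hcons : ∀ {w}, w ∈ L∗ → f ++ w ∈ L∗ := fun hw =>
        (mul_kstar_le_kstar : L * L∗ ≤ L∗) (append_mem_mul hf hw)
      have hws' : ∀ w ∈ ws, w ∈ L := fun w hw => hws w (List.mem_cons_of_mem f hw)
      rcases List.append_eq_append_iff.mp hxy with ⟨a, rfl, hy⟩ | ⟨c, rfl, hc⟩
      · exact Or.inr ⟨x, ⟨[], nil_mem_kstar L, rfl⟩, a, hf, ws.flatten, join_mem_kstar hws', hy.symm⟩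
      · rcases ih hc.symm hws' with ⟨hc', rfl⟩ | ⟨v, ⟨w, hw, rfl⟩, hv⟩
        · exact Or.inl ⟨hcons hc', rfl⟩
        · exact Or.inr ⟨v, ⟨f ++ w, hcons hw, List.append_assoc f w v⟩, hv⟩
  · rintro (⟨hx, rfl⟩ | ⟨v, ⟨w, hw, rfl⟩, hv⟩)
    · simpa using hx
    · obtain ⟨a, ha, b, hb, rfl⟩ := hv
      have hvab : v ++ a ++ b ∈ L∗ := (mul_kstar_le_kstar : L * L∗ ≤ L∗) (append_mem_mul ha hb)
      rw [← kstar_mul_kstar L]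
      simpa using append_mem_mul hw hvab

theorem IsRegular.kstar (hL : L.IsRegular) : L∗.IsRegular := by
  let suffixes (x : List α) : Set (List α) := {v | ∃ w ∈ L∗, w ++ v = x}
  refine .of_append_mem_iff (d := fun x => (L.leftQuotient '' suffixes x, x ∈ L∗))
    ((hL.finite_range_leftQuotient.powerset.prod Set.finite_univ).subset ?_)
    (fun p y => (p.2 ∧ y = []) ∨ ∃ A ∈ p.1, y ∈ A * L∗)
    fun x y => by simp only [append_mem_kstar_iff, Set.exists_mem_image]; rfl
  rintro _ ⟨x, rfl⟩
  exact ⟨Set.image_subset_range _ _, trivial⟩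

end Language

theorem RegularExpression.isRegular_matches' (r : RegularExpression α) : r.matches'.IsRegular := by
  induction r with
  | zero => exact .of_finite Set.finite_empty
  | epsilon => exact .of_finite (Set.finite_singleton [])
  | char a => exact .of_finite (Set.finite_singleton [a])
  | plus r s hr hs => exact hr.add hs
  | comp r s hr hs => exact hr.mul hs
  | star r hr => exact hr.kstar

def IsFiniteTailTwoComet (L : Language α) : Prop :=
  ∃ E G H : Language α, E.Finite ∧ G.IsRegular ∧ H.IsRegular ∧
    G ≠ 0 ∧ G ≠ 1 ∧ L = E * G∗ * H

namespace IsFiniteTailTwoComet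

variable {K : Language α}

theorem isRegular (hK : IsFiniteTailTwoComet K) : K.IsRegular := by
  obtain ⟨E, G, H, hE, hG, hH, -, -, rfl⟩ := hK
  exact ((Language.IsRegular.of_finite hE).mul hG.kstar).mul hH

theorem finite_mul {F : Language α} (hF : F.Finite) (hK : IsFiniteTailTwoComet K) :
    IsFiniteTailTwoComet (F * K) := by
  obtain ⟨E, G, H, hE, hG, hH, hG0, hG1, rfl⟩ := hK
  refine ⟨F * E, G, H, ?_, hG, hH, hG0, hG1, by simp only [mul_assoc]⟩
  rw [Language.mul_def]
  exact hF.image2 _ hE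

theorem kstar_mul {A : Language α} (hA : A.IsRegular) (hK : IsFiniteTailTwoComet K) :
    IsFiniteTailTwoComet (A∗ * K) := by
  by_cases hA0 : A = 0
  · simpa [hA0] using hK
  by_cases hA1 : A = 1
  · simpa [hA1] using hK
  exact ⟨1, A, K, Set.finite_singleton [], hA, hK.isRegular, hA0, hA1, by rw [one_mul]⟩

theorem unionFree_mul {r : RegularExpression α} (hr : r.UnionFree)
    (hK : IsFiniteTailTwoComet K) : IsFiniteTailTwoComet (r.matches' * K) := by
  induction r generalizing K with
  | zero => exact finite_mul Set.finite_empty hK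
  | char a => exact finite_mul (Set.finite_singleton [a]) hK
  | comp r s ihr ihs =>
    change IsFiniteTailTwoComet (r.matches' * s.matches' * K)
    rw [mul_assoc]
    exact ihr hr.1 (ihs hr.2 hK)
  | star r _ => exact kstar_mul r.isRegular_matches' hK
  | epsilon | plus => exact hr.elim

end IsFiniteTailTwoComet

theorem twoComet_unionFree_to_finite_tail_general (L E G H : Language α)
    (hE : IsUnionFree E) (hG : G.IsRegular) (hH : H.IsRegular)
    (hG0 : G ≠ 0) (hG1 : G ≠ 1) (hL : L = E * G∗ * H) :
    ∃ E' G' H' : Language α, E'.Finite ∧ G'.IsRegular ∧ H'.IsRegular ∧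
      G' ≠ 0 ∧ G' ≠ 1 ∧ L = E' * G'∗ * H' := by
  obtain ⟨r, hr, rfl⟩ := hE
  have hGH : IsFiniteTailTwoComet (G∗ * H) :=
    ⟨1, G, H, Set.finite_singleton [], hG, hH, hG0, hG1, by rw [one_mul]⟩
  rw [hL, mul_assoc]
  exact IsFiniteTailTwoComet.unionFree_mul hr hGH

/-- A two-sided comet whose first tail is union-free has a representation with finite first tail. -/
theorem twoComet_unionFree_to_finite_tail [Fintype α] (L E G H : Language α)
    (hE : IsUnionFree E) (hG : G.IsRegular) (hH : H.IsRegular)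
    (hG0 : G ≠ 0) (hG1 : G ≠ 1) (hL : L = E * G∗ * H) :
    ∃ E' G' H' : Language α, E'.Finite ∧ G'.IsRegular ∧ H'.IsRegular ∧
      G' ≠ 0 ∧ G' ≠ 1 ∧ L = E' * G'∗ * H' :=
  twoComet_unionFree_to_finite_tail_general L E G H hE hG hH hG0 hG1 hL
end

section
/- Over any finite alphabet α, the language {ε} is a star language but not a two-sided comet. -/
open Language Computability

universe u

variable {α : Type}

/-! The empty language is regular, and its star is `{ε}`. Conversely, if `{ε} = E · G∗ · H` then `ε`
lies in `E` and in `H`, so `G ⊆ G∗ ⊆ E · G∗ · H = {ε}`, forcing `G = ∅` or `G = {ε}`. -/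

namespace Language

theorem isRegular_zero : (0 : Language α).IsRegular :=
  ⟨Unit, inferInstance, ⟨fun _ _ => (), (), ∅⟩, by ext w; simp [DFA.mem_accepts]⟩

theorem nil_mem_mul_iff {L M : Language α} : [] ∈ L * M ↔ [] ∈ L ∧ [] ∈ M := by
  simp only [mem_mul, List.append_eq_nil_iff]
  constructor
  · rintro ⟨x, hx, y, hy, rfl, rfl⟩
    exact ⟨hx, hy⟩
  · rintro ⟨hL, hM⟩
    exact ⟨[], hL, [], hM, rfl, rfl⟩

theorem one_le_iff_nil_mem {L : Language α} : 1 ≤ L ↔ [] ∈ L :=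
  ⟨fun h => h nil_mem_one, fun h w hw => (mem_one w).mp hw ▸ h⟩

theorem le_one_iff {L : Language α} : L ≤ 1 ↔ L = 0 ∨ L = 1 := by
  constructor
  · intro hL
    by_cases hnil : [] ∈ L
    · refine Or.inr (le_antisymm hL fun w hw => ?_)
      rwa [(mem_one w).mp hw]
    · refine Or.inl (le_bot_iff.mp fun w hw => hnil ?_)
      rwa [← (mem_one w).mp (hL hw)]
  · rintro (rfl | rfl)
    exacts [bot_le, le_rfl]

end Language

theorem le_mul_kstar_mul {K : Type*} [KleeneAlgebra K] {e g h : K} (he : 1 ≤ e) (hh : 1 ≤ h) :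
    g ≤ e * g∗ * h :=
  calc g = 1 * g * 1 := by rw [one_mul, mul_one]
    _ ≤ e * g∗ * h := mul_le_mul' (mul_le_mul' he le_kstar) hh

theorem isStarLang_one : IsStarLang (1 : Language α) :=
  ⟨0, Language.isRegular_zero, kstar_zero.symm⟩

theorem not_isTwoComet_one : ¬ IsTwoComet (1 : Language α) := by
  rintro ⟨E, G, H, -, -, -, hG0, hG1, hL⟩
  obtain ⟨⟨hE, -⟩, hH⟩ : ([] ∈ E ∧ [] ∈ G∗) ∧ [] ∈ H := by
    simpa only [hL, Language.nil_mem_mul_iff] using Language.nil_mem_one (α := α)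
  have hG : G ≤ 1 := hL ▸ le_mul_kstar_mul (Language.one_le_iff_nil_mem.mpr hE)
    (Language.one_le_iff_nil_mem.mpr hH)
  exact (Language.le_one_iff.mp hG).elim hG0 hG1

theorem eps_star_not_twoComet_general :
    IsStarLang (1 : Language α) ∧ ¬ IsTwoComet (1 : Language α) :=
  ⟨isStarLang_one, not_isTwoComet_one⟩

/-- The language `{ε}` is a star language but not a two-sided comet. -/
theorem eps_star_not_twoComet [Fintype α] :
    IsStarLang (1 : Language α) ∧ ¬ IsTwoComet (1 : Language α) :=
  eps_star_not_twoComet_general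
end

section
/- Let α be a finite alphabet consisting of exactly two distinct letters a and b. The language L = ⊤·({ba}·{b}∗·({aa}·{b}∗)∗) (where {ba}, {b}, {aa} denote the singleton languages of the words ba, b, aa) is symmetric definite, but L does not have the non-counting property: for every k ≥ 1 there exist words x, y, z such that exactly one of x·y^k·z ∈ L and x·y^{k+1}·z ∈ L holds. -/
open Language Computability

universe u

variable {α : Type}

/-- The witness language `⊤ · ({ba}·{b}∗·({aa}·{b}∗)∗)`. -/
def sydefWitness (a b : α) : Language α :=
  (⊤ : Language α) *
    (({[b, a]} : Language α) * ({[b]} : Language α)∗ *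
      (({[a, a]} : Language α) * ({[b]} : Language α)∗)∗)

/-!
The core `M = {ba}·K`, with `K = {b}∗({aa}{b}∗)∗`, is regular by Myhill–Nerode: unfolding the stars
gives `K = 1 + b·K + aa·K`, so every left quotient of `M` is one of `M`, `a·K`, `K`, `∅`. Hence the
witness `⊤·M = ⊤·⊤·M` is symmetric definite. Every word of `M` contains `b`, so `b·aᵏ` lies in
`⊤·M` only if it lies in `M` itself, and quotienting by letters shows that this happens exactly
when `k` is odd. Thus `x = b`, `y = a`, `z = ε` separate `k` from `k + 1` for every `k`.
-/

namespace Language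

variable {l m : Language α}

@[simp]
theorem leftQuotient_zero (x : List α) : (0 : Language α).leftQuotient x = 0 := rfl

@[simp]
theorem leftQuotient_top (x : List α) : (⊤ : Language α).leftQuotient x = ⊤ := rfl

theorem leftQuotient_add (x : List α) :
    (l + m).leftQuotient x = l.leftQuotient x + m.leftQuotient x := rfl

@[simp]
theorem leftQuotient_one_cons (c : α) (x : List α) :
    (1 : Language α).leftQuotient (c :: x) = 0 := by
  ext w
  simp [mem_one]

theorem cons_mem_iff_mem_leftQuotient {c : α} {w : List α} :
    c :: w ∈ l ↔ w ∈ l.leftQuotient [c] :=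
  Iff.rfl

theorem mem_singleton_mul {u w : List α} :
    w ∈ ({u} : Language α) * l ↔ ∃ v ∈ l, u ++ v = w :=
  ⟨fun ⟨_, hu, v, hv, h⟩ => ⟨v, hv, hu ▸ h⟩, fun ⟨v, hv, h⟩ => ⟨u, rfl, v, hv, h⟩⟩

@[simp]
theorem singleton_nil_mul : ({[]} : Language α) * l = l :=
  one_mul l

@[simp]
theorem leftQuotient_singleton_cons_mul (c : α) (u : List α) :
    (({c :: u} : Language α) * l).leftQuotient [c] = {u} * l := by
  ext w
  simp [mem_singleton_mul]

theorem leftQuotient_singleton_cons_mul_of_ne {c d : α} (h : d ≠ c) (u : List α) :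
    (({c :: u} : Language α) * l).leftQuotient [d] = 0 := by
  ext w
  simp [mem_singleton_mul, h.symm]

theorem range_leftQuotient_subset {S : Set (Language α)} (hl : l ∈ S)
    (hS : ∀ m ∈ S, ∀ c : α, m.leftQuotient [c] ∈ S) : Set.range l.leftQuotient ⊆ S := by
  rintro _ ⟨x, rfl⟩
  induction x generalizing l with
  | nil => exact hl
  | cons c x ih => exact leftQuotient_append l [c] x ▸ ih (hS l hl c)

theorem IsRegular.of_leftQuotient_mem {S : Set (Language α)} (hfin : S.Finite) (hl : l ∈ S)
    (hS : ∀ m ∈ S, ∀ c : α, m.leftQuotient [c] ∈ S) : l.IsRegular :=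
  .of_finite_range_leftQuotient (hfin.subset (range_leftQuotient_subset hl hS))

theorem isRegular_top : (⊤ : Language α).IsRegular :=
  .of_leftQuotient_mem (Set.finite_singleton ⊤) rfl (by simp)

theorem top_mul_top : (⊤ : Language α) * ⊤ = ⊤ :=
  top_le_iff.mp fun w _ => ⟨[], trivial, w, trivial, rfl⟩

theorem cons_mem_top_mul_iff {b : α} {w : List α} (hm : ∀ v ∈ m, b ∈ v) (hw : b ∉ w) :
    b :: w ∈ ⊤ * m ↔ b :: w ∈ m := by
  refine ⟨fun ⟨u, _, v, hv, huv⟩ => ?_, fun h => ⟨[], trivial, _, h, rfl⟩⟩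
  cases u with
  | nil => exact huv ▸ hv
  | cons c u =>
    cases huv
    exact absurd (List.mem_append_right u (hm v hv)) hw

end Language

theorem wordPow_singleton (c : α) (n : ℕ) : wordPow [c] n = List.replicate n c := by
  induction n with
  | zero => rfl
  | succ n ih => rw [wordPow, ih, List.replicate_succ, List.singleton_append]

def sydefTail (a b : α) : Language α :=
  ({[b]} : Language α)∗ * (({[a, a]} : Language α) * ({[b]} : Language α)∗)∗

section sydefTail

open Language

variable {a b : α}

theorem sydefWitness_eq : sydefWitness a b = ⊤ * ({[b, a]} * sydefTail a b) := by
  rw [sydefWitness, sydefTail, mul_assoc ({[b, a]} : Language α)]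

theorem sydefTail_eq :
    sydefTail a b = 1 + {[b]} * sydefTail a b + {[a, a]} * sydefTail a b := by
  set S : Language α := {[a, a]} * ({[b]} : Language α)∗
  calc sydefTail a b = (1 + {[b]} * {[b]}∗) * S∗ := by
        rw [one_add_self_mul_kstar_eq_kstar]; rfl
    _ = (1 + S * S∗) + {[b]} * sydefTail a b := by
      rw [add_mul, one_mul, mul_assoc, one_add_self_mul_kstar_eq_kstar]; rfl
    _ = 1 + {[b]} * sydefTail a b + {[a, a]} * sydefTail a b := by
      rw [mul_assoc]; exact add_right_comm _ _ _

theorem leftQuotient_sydefTail_b (hab : a ≠ b) :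
    (sydefTail a b).leftQuotient [b] = sydefTail a b := by
  conv_lhs => rw [sydefTail_eq]
  simp only [leftQuotient_add, leftQuotient_one_cons, leftQuotient_singleton_cons_mul,
    singleton_nil_mul, zero_add, add_zero, leftQuotient_singleton_cons_mul_of_ne hab.symm]

theorem leftQuotient_sydefTail_a (hab : a ≠ b) :
    (sydefTail a b).leftQuotient [a] = {[a]} * sydefTail a b := by
  conv_lhs => rw [sydefTail_eq]
  simp only [leftQuotient_add, leftQuotient_one_cons, leftQuotient_singleton_cons_mul, zero_add,
    add_zero, leftQuotient_singleton_cons_mul_of_ne hab]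

theorem leftQuotient_sydefTail_of_ne {c : α} (ha : c ≠ a) (hb : c ≠ b) :
    (sydefTail a b).leftQuotient [c] = 0 := by
  conv_lhs => rw [sydefTail_eq]
  simp only [leftQuotient_add, leftQuotient_one_cons, add_zero,
    leftQuotient_singleton_cons_mul_of_ne ha, leftQuotient_singleton_cons_mul_of_ne hb]

theorem isRegular_singleton_mul_sydefTail (hab : a ≠ b) :
    (({[b, a]} : Language α) * sydefTail a b).IsRegular := by
  refine .of_leftQuotient_mem (S := {{[b, a]} * sydefTail a b, {[a]} * sydefTail a b,
    sydefTail a b, 0}) (Set.toFinite _) (by simp) ?_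
  intro m hm c
  rcases hm with rfl | rfl | rfl | rfl
  all_goals
    by_cases hca : c = a
    · subst hca
      simp [leftQuotient_sydefTail_a hab, leftQuotient_singleton_cons_mul_of_ne hab]
    by_cases hcb : c = b
    · subst hcb
      simp [leftQuotient_sydefTail_b hab, leftQuotient_singleton_cons_mul_of_ne hab.symm]
    simp [leftQuotient_sydefTail_of_ne hca hcb, leftQuotient_singleton_cons_mul_of_ne hca,
      leftQuotient_singleton_cons_mul_of_ne hcb]

theorem replicate_mem_sydefTail_iff (hab : a ≠ b) (n : ℕ) :
    (List.replicate n a ∈ sydefTail a b ↔ Even n) ∧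
      (List.replicate n a ∈ {[a]} * sydefTail a b ↔ Odd n) := by
  induction n with
  | zero =>
    exact ⟨iff_of_true ⟨[], nil_mem_kstar _, [], nil_mem_kstar _, rfl⟩ Even.zero,
      iff_of_false (by simp [mem_singleton_mul]) Nat.not_odd_zero⟩
  | succ n ih =>
    rw [List.replicate_succ, cons_mem_iff_mem_leftQuotient, cons_mem_iff_mem_leftQuotient,
      leftQuotient_sydefTail_a hab, leftQuotient_singleton_cons_mul, singleton_nil_mul, ih.1, ih.2,
      Nat.even_add_one, Nat.not_even_iff_odd, Nat.odd_add_one, Nat.not_odd_iff_even]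
    exact ⟨Iff.rfl, Iff.rfl⟩

theorem cons_replicate_mem_sydefWitness_iff (hab : a ≠ b) (k : ℕ) :
    b :: List.replicate k a ∈ sydefWitness a b ↔ Odd k := by
  rw [sydefWitness_eq, cons_mem_top_mul_iff, cons_mem_iff_mem_leftQuotient,
    leftQuotient_singleton_cons_mul, (replicate_mem_sydefTail_iff hab k).2]
  · rintro v ⟨_, rfl, w, -, rfl⟩
    simp
  · simp [hab.symm]

end sydefTail

theorem sydefWitness_symDef_not_nonCounting_general (a b : α) (hab : a ≠ b) :
    IsSymDef (sydefWitness a b) ∧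
    (∀ k : ℕ, 1 ≤ k → ∃ x y z : List α,
      Xor' (x ++ wordPow y k ++ z ∈ sydefWitness a b)
           (x ++ wordPow y (k + 1) ++ z ∈ sydefWitness a b)) := by
  refine ⟨⟨⊤, _, Language.isRegular_top, isRegular_singleton_mul_sydefTail hab, ?_⟩, ?_⟩
  · rw [sydefWitness_eq, Language.top_mul_top]
  · intro k _
    refine ⟨[b], [a], [], ?_⟩
    simp only [wordPow_singleton, List.append_nil, List.singleton_append,
      cons_replicate_mem_sydefWitness_iff hab, Nat.odd_add_one]
    exact xor_not_right.mpr Iff.rfl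

/-- Over the alphabet `{a, b}`, the language `⊤·{ba}{b}∗({aa}{b}∗)∗` is symmetric definite
but does not have the non-counting property. -/
theorem sydefWitness_symDef_not_nonCounting [Fintype α] (a b : α) (hab : a ≠ b)
    (hall : ∀ c : α, c = a ∨ c = b) :
    IsSymDef (sydefWitness a b) ∧
    (∀ k : ℕ, 1 ≤ k → ∃ x y z : List α,
      Xor' (x ++ wordPow y k ++ z ∈ sydefWitness a b)
           (x ++ wordPow y (k + 1) ++ z ∈ sydefWitness a b)) :=
  sydefWitness_symDef_not_nonCounting_general a b hab
end

section
/- Let α be a finite alphabet with two distinct letters a and b. Then the family of star languages over α is incomparable to the family of circular languages over α and also incomparable to the family of commutative languages over α. -/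
open Language Computability

universe u

variable {α : Type}

open scoped Classical

lemma DFA.evalFrom_cons' {σ : Type} (M : DFA α σ) (s : σ) (c : α) (w : List α) :
    M.evalFrom s (c :: w) = M.evalFrom (M.step s c) w := rfl

lemma DFA.eval_def' {σ : Type} (M : DFA α σ) (w : List α) :
    M.eval w = M.evalFrom M.start w := rfl

/-- DFA accepting exactly the singleton word `[a]`. -/
noncomputable def oneDFA (a : α) : DFA α (Fin 3) :=
  ⟨fun q c => if q = 0 ∧ c = a then 1 else 2, 0, {1}⟩

lemma oneDFA_dead (a : α) (w : List α) : (oneDFA a).evalFrom 2 w = 2 := by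
  induction w with
  | nil => rfl
  | cons c w ih =>
    rw [DFA.evalFrom_cons']
    have : (oneDFA a).step 2 c = 2 := by simp [oneDFA]
    rw [this]; exact ih

lemma oneDFA_accepts (a : α) : (oneDFA a).accepts = ({[a]} : Language α) := by
  ext w
  have hstart : (oneDFA a).start = 0 := rfl
  have hacc : (oneDFA a).accept = {1} := rfl
  have hstep0 : ∀ c, (oneDFA a).step 0 c = if c = a then 1 else 2 := by
    intro c; simp [oneDFA]
  constructor
  · intro hw
    rw [DFA.mem_accepts, DFA.eval_def', hstart, hacc] at hw
    match w with
    | [] => simp [DFA.evalFrom_nil] at hw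
    | [c] =>
      rw [DFA.evalFrom_singleton, hstep0] at hw
      by_cases h : c = a
      · subst h; exact Set.mem_singleton _
      · simp [h] at hw
    | c :: d :: w =>
      exfalso
      rw [DFA.evalFrom_cons', DFA.evalFrom_cons'] at hw
      have h1 : (oneDFA a).step ((oneDFA a).step 0 c) d = 2 := by
        rw [hstep0]; by_cases h : c = a <;> simp [h, oneDFA]
      rw [h1, oneDFA_dead] at hw
      simp at hw
  · intro hw
    have : w = [a] := hw
    subst this
    rw [DFA.mem_accepts, DFA.eval_def', hstart, hacc, DFA.evalFrom_singleton, hstep0]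
    simp

lemma oneDFA_regular (a : α) : ({[a]} : Language α).IsRegular :=
  ⟨Fin 3, inferInstance, oneDFA a, oneDFA_accepts a⟩

/-- DFA accepting exactly the word `[a,b]`. -/
noncomputable def twoDFA (a b : α) : DFA α (Fin 4) :=
  ⟨fun q c => if q = 0 ∧ c = a then 1 else if q = 1 ∧ c = b then 2 else 3, 0, {2}⟩

lemma twoDFA_dead (a b : α) (w : List α) : (twoDFA a b).evalFrom 3 w = 3 := by
  induction w with
  | nil => rfl
  | cons c w ih =>
    rw [DFA.evalFrom_cons']
    have : (twoDFA a b).step 3 c = 3 := by simp [twoDFA]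
    rw [this]; exact ih

lemma twoDFA_accepts (a b : α) : (twoDFA a b).accepts = ({[a, b]} : Language α) := by
  ext w
  have hstart : (twoDFA a b).start = 0 := rfl
  have hacc : (twoDFA a b).accept = {2} := rfl
  constructor
  · intro hw
    rw [DFA.mem_accepts, DFA.eval_def', hstart, hacc] at hw
    match w with
    | [] => simp [DFA.evalFrom_nil] at hw
    | [c] =>
      rw [DFA.evalFrom_singleton] at hw
      by_cases h : c = a <;> simp [twoDFA, h] at hw
    | [c, d] =>
      rw [DFA.evalFrom_cons', DFA.evalFrom_singleton] at hw
      by_cases h : c = a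
      · have h1 : (twoDFA a b).step 0 c = 1 := by simp [twoDFA, h]
        rw [h1] at hw
        by_cases h2 : d = b
        · subst h; subst h2; exact Set.mem_singleton _
        · simp [twoDFA, h2] at hw
      · have h1 : (twoDFA a b).step 0 c = 3 := by simp [twoDFA, h]
        rw [h1] at hw
        simp [twoDFA] at hw
    | c :: d :: e :: w =>
      exfalso
      rw [DFA.evalFrom_cons', DFA.evalFrom_cons', DFA.evalFrom_cons'] at hw
      set s1 := (twoDFA a b).step 0 c with hs1
      set s2 := (twoDFA a b).step s1 d with hs2
      have h1 : s1 = 1 ∨ s1 = 3 := by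
        rw [hs1]; by_cases h : c = a <;> simp [twoDFA, h]
      have h2 : s2 = 2 ∨ s2 = 3 := by
        rcases h1 with h | h <;> rw [hs2, h] <;> [skip; simp [twoDFA]]
        by_cases hd : d = b <;> simp [twoDFA, hd]
      have h3 : (twoDFA a b).step s2 e = 3 := by
        rcases h2 with h | h <;> rw [h] <;> simp [twoDFA]
      rw [h3, twoDFA_dead] at hw
      simp at hw
  · intro hw
    have : w = [a, b] := hw
    subst this
    rw [DFA.mem_accepts, DFA.eval_def', hstart, hacc, DFA.evalFrom_cons',
      DFA.evalFrom_singleton]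
    have h1 : (twoDFA a b).step 0 a = 1 := by simp [twoDFA]
    rw [h1]
    simp [twoDFA]

lemma twoDFA_regular (a b : α) : ({[a, b]} : Language α).IsRegular :=
  ⟨Fin 4, inferInstance, twoDFA a b, twoDFA_accepts a b⟩

/-- `STAR` is incomparable to `CIRC` and to `COMM`. -/
theorem star_incomparable_circ_comm [Fintype α] (a b : α) (hab : a ≠ b) :
    Incomparable (IsStarLang (α := α)) IsCircular ∧
    Incomparable (IsStarLang (α := α)) IsCommutative := by
  -- Witness 1: L1 = {[a,b]}∗ is a star language but neither circular nor commutative.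
  set L1 : Language α := ({[a, b]} : Language α)∗ with hL1
  have hL1star : IsStarLang L1 := ⟨{[a, b]}, twoDFA_regular a b, rfl⟩
  have h_ab : [a, b] ∈ L1 := by
    have := Language.join_mem_kstar (l := ({[a, b]} : Language α)) (L := [[a, b]])
      (by intro y hy; simp at hy; subst hy; exact Set.mem_singleton _)
    simpa using this
  have h_ba : [b, a] ∉ L1 := by
    intro h
    rcases Language.mem_kstar.mp h with ⟨S, hS, hmem⟩
    cases S with
    | nil => simp at hS
    | cons y S' =>
      have hy : y = [a, b] := hmem y (by simp)
      subst hy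
      rw [List.flatten_cons] at hS
      have : b = a := by
        have := hS
        simp at this
        exact this.1
      exact hab this.symm
  -- Witness 2: L2 = {[a]} is circular and commutative but not a star language.
  set L2 : Language α := ({[a]} : Language α) with hL2
  have hL2circ : IsCircular L2 := by
    refine ⟨oneDFA_regular a, ?_⟩
    intro u v h
    have h' : u ++ v = [a] := h
    cases u with
    | nil => simpa using h
    | cons c u' =>
      rw [List.cons_append] at h'
      have hc : c = a := by
        have := congrArg (fun l => l.head?) h'
        simpa using this
      have h2 : u' ++ v = [] := by
        have := congrArg (fun l => l.tail) h'
        simpa using this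
      rcases List.append_eq_nil_iff.mp h2 with ⟨hu', hv⟩
      subst hc; subst hu'; subst hv
      exact Set.mem_singleton _
  have hL2comm : IsCommutative L2 := by
    refine ⟨oneDFA_regular a, ?_⟩
    intro w hw v hperm
    have hwa : w = [a] := hw
    subst hwa
    have : v = [a] := (List.singleton_perm.mp hperm).symm
    subst this
    exact Set.mem_singleton _
  have hL2notstar : ¬ IsStarLang L2 := by
    rintro ⟨H, _, hL⟩
    have hnil : ([] : List α) ∈ L2 := by rw [hL]; exact H.nil_mem_kstar
    have : ([] : List α) = [a] := hnil
    simp at this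
  have hL1notcirc : ¬ IsCircular L1 := by
    rintro ⟨_, hcirc⟩
    exact h_ba (hcirc [a] [b] (by simpa using h_ab))
  have hL1notcomm : ¬ IsCommutative L1 := by
    rintro ⟨_, hcomm⟩
    exact h_ba (hcomm _ h_ab _ (List.Perm.swap b a []))
  exact ⟨⟨⟨L1, hL1star, hL1notcirc⟩, ⟨L2, hL2circ, hL2notstar⟩⟩,
    ⟨⟨L1, hL1star, hL1notcomm⟩, ⟨L2, hL2comm, hL2notstar⟩⟩⟩
end
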